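/- Let (R, ⊕, ·) be a fully idempotent semihyperring. Then τ(FP_R) = {O_λ : λ a fuzzy hyperideal of R} is a topology on the set FP_R; that is, ∅ ∈ τ(FP_R) and FP_R ∈ τ(FP_R), τ(FP_R) is closed under finite intersections, and τ(FP_R) is closed under arbitrary unions. -/

import Mathlib

/-- The unit interval `[0,1]` is a complete lattice. -/
noncomputable instance : Fact ((0:ℝ) ≤ 1) := ⟨zero_le_one⟩

/-- A semihyperring `(R, ⊕, ·)`: a hyperoperation `hadd` (with nonempty values),
a binary multiplication `mul`, and an element `zero`, satisfying commutativity and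
(extended) associativity of `⊕`, associativity of `·`, two-sided distributivity of
`·` over `⊕` (as sets), and `0 ⊕ x = {x}`, `0·x = 0 = x·0`. -/
class Semihyperring (R : Type*) where
  hadd : R → R → Set R
  mul : R → R → R
  zero : R
  hadd_nonempty : ∀ x y : R, (hadd x y).Nonempty
  hadd_comm : ∀ x y : R, hadd x y = hadd y x
  hadd_assoc : ∀ x y z : R, (⋃ w ∈ hadd y z, hadd x w) = ⋃ w ∈ hadd x y, hadd w z
  mul_assoc : ∀ x y z : R, mul (mul x y) z = mul x (mul y z)
  left_distrib : ∀ x y z : R, (fun w => mul x w) '' hadd y z = hadd (mul x y) (mul x z)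
  right_distrib : ∀ x y z : R, (fun w => mul w z) '' hadd x y = hadd (mul x z) (mul y z)
  zero_hadd : ∀ x : R, hadd zero x = {x}
  hadd_zero : ∀ x : R, hadd x zero = {x}
  zero_mul : ∀ x : R, mul zero x = zero
  mul_zero : ∀ x : R, mul x zero = zero

namespace Semihyperring

variable {R : Type*} [Semihyperring R]

/-- The hyperoperation `⊕` extended to subsets: `A ⊕ B = ⋃ {a ⊕ b : a ∈ A, b ∈ B}`. -/
def haddSet (A B : Set R) : Set R := ⋃ a ∈ A, ⋃ b ∈ B, hadd a b

/-- The hypersum `x₁ ⊕ x₂ ⊕ ⋯ ⊕ xₚ` of a list of elements (the empty hypersum is `{0}`,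
which is neutral since `0 ⊕ x = {x}`). -/
def hsumList : List R → Set R
  | [] => {zero}
  | x :: xs => haddSet {x} (hsumList xs)

/-- A (two-sided) hyperideal: a nonempty subset closed under `⊕` and under
multiplication by arbitrary elements of `R` on both sides. -/
def IsHyperideal (I : Set R) : Prop :=
  I.Nonempty ∧ (∀ x ∈ I, ∀ y ∈ I, hadd x y ⊆ I) ∧
    (∀ r : R, ∀ x ∈ I, mul r x ∈ I ∧ mul x r ∈ I)

/-- A right hyperideal. -/
def IsRightHyperideal (I : Set R) : Prop :=
  I.Nonempty ∧ (∀ x ∈ I, ∀ y ∈ I, hadd x y ⊆ I) ∧ (∀ x ∈ I, ∀ r : R, mul x r ∈ I)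

/-- A left hyperideal. -/
def IsLeftHyperideal (I : Set R) : Prop :=
  I.Nonempty ∧ (∀ x ∈ I, ∀ y ∈ I, hadd x y ⊆ I) ∧ (∀ x ∈ I, ∀ r : R, mul r x ∈ I)

/-- The product of two subsets:
`AB = {x : x ∈ a₁b₁ ⊕ ⋯ ⊕ aₚbₚ for some p ≥ 1, aᵢ ∈ A, bᵢ ∈ B}`. -/
def setProd (A B : Set R) : Set R :=
  {x | ∃ l : List (R × R), l ≠ [] ∧ (∀ p ∈ l, p.1 ∈ A ∧ p.2 ∈ B) ∧
    x ∈ hsumList (l.map fun p => mul p.1 p.2)}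

/-- `R` is fully idempotent if every hyperideal `I` satisfies `I² = I`. -/
def FullyIdempotent (R : Type*) [Semihyperring R] : Prop :=
  ∀ I : Set R, IsHyperideal I → setProd I I = I

/-- `R` is (von Neumann) regular if every `x` satisfies `x = x·a·x` for some `a`. -/
def Regular (R : Type*) [Semihyperring R] : Prop :=
  ∀ x : R, ∃ a : R, x = mul (mul x a) x

/-- A fuzzy hyperideal of `R`: a function `μ : R → [0,1]` with
`inf {μ z : z ∈ x ⊕ y} ≥ min (μ x) (μ y)` and `μ (x·y) ≥ max (μ x) (μ y)`. -/
def IsFuzzyHyperideal (μ : R → unitInterval) : Prop :=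
  (∀ x y : R, μ x ⊓ μ y ≤ ⨅ z ∈ hadd x y, μ z) ∧
  (∀ x y : R, μ x ⊔ μ y ≤ μ (mul x y))

/-- A fuzzy right hyperideal: `inf {λ z : z ∈ x ⊕ y} ≥ min (λ x) (λ y)` and `λ (x·y) ≥ λ x`. -/
def IsFuzzyRightHyperideal (μ : R → unitInterval) : Prop :=
  (∀ x y : R, μ x ⊓ μ y ≤ ⨅ z ∈ hadd x y, μ z) ∧
  (∀ x y : R, μ x ≤ μ (mul x y))

/-- A fuzzy left hyperideal: `inf {λ z : z ∈ x ⊕ y} ≥ min (λ x) (λ y)` and `λ (x·y) ≥ λ y`. -/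
def IsFuzzyLeftHyperideal (μ : R → unitInterval) : Prop :=
  (∀ x y : R, μ x ⊓ μ y ≤ ⨅ z ∈ hadd x y, μ z) ∧
  (∀ x y : R, μ y ≤ μ (mul x y))

/-- The product `λμ` of fuzzy subsets:
`(λμ)(x) = ⋁ { ⋀_{1≤i≤p} (λ yᵢ ⊓ μ zᵢ) : p ≥ 1, x ∈ y₁z₁ ⊕ ⋯ ⊕ yₚzₚ }`. -/
noncomputable def fprod (lam mu : R → unitInterval) (x : R) : unitInterval :=
  sSup {t | ∃ l : List (R × R), l ≠ [] ∧
    x ∈ hsumList (l.map fun p => mul p.1 p.2) ∧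
    t = ⨅ p ∈ l, lam p.1 ⊓ mu p.2}

/-- The sum `λ ⊕ μ` of fuzzy subsets:
`(λ ⊕ μ)(x) = ⋁ { λ y ⊓ μ z : x ∈ y ⊕ z }`. -/
noncomputable def fsum (lam mu : R → unitInterval) (x : R) : unitInterval :=
  sSup {t | ∃ y z : R, x ∈ hadd y z ∧ t = lam y ⊓ mu z}

/-- The composition `λ ∘ μ` of fuzzy subsets:
`(λ ∘ μ)(x) = ⋁ { λ y ⊓ μ z : x = y·z }` (with `⋁ ∅ = 0`). -/
noncomputable def fcomp (lam mu : R → unitInterval) (x : R) : unitInterval :=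
  sSup {t | ∃ y z : R, x = mul y z ∧ t = lam y ⊓ mu z}

/-- A fuzzy prime hyperideal: a fuzzy hyperideal `η` such that for all fuzzy hyperideals
`λ, μ`, `λμ ≤ η` implies `λ ≤ η` or `μ ≤ η`. -/
def IsFuzzyPrimeHyperideal (η : R → unitInterval) : Prop :=
  IsFuzzyHyperideal η ∧ ∀ lam mu : R → unitInterval, IsFuzzyHyperideal lam →
    IsFuzzyHyperideal mu → fprod lam mu ≤ η → lam ≤ η ∨ mu ≤ η

/-- A fuzzy irreducible hyperideal: a fuzzy hyperideal `η` such that for all fuzzy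
hyperideals `λ, μ`, `min (λ, μ) = η` (pointwise) implies `λ = η` or `μ = η`. -/
def IsFuzzyIrreducibleHyperideal (η : R → unitInterval) : Prop :=
  IsFuzzyHyperideal η ∧ ∀ lam mu : R → unitInterval, IsFuzzyHyperideal lam →
    IsFuzzyHyperideal mu → lam ⊓ mu = η → lam = η ∨ mu = η

/-- `FP R`: the set of proper fuzzy prime hyperideals of `R`
(`η` is proper if it is not the constant function `1`). -/
def FP (R : Type*) [Semihyperring R] : Set (R → unitInterval) :=
  {η | IsFuzzyPrimeHyperideal η ∧ η ≠ fun _ => 1}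

/-- `O λ = {μ ∈ FP R : λ ≰ μ}`. -/
def O (lam : R → unitInterval) : Set (R → unitInterval) :=
  {mu ∈ FP R | ¬ lam ≤ mu}

/-- The sum `Σᵢ ηᵢ` of an arbitrary family of fuzzy subsets:
`(Σᵢ ηᵢ)(x) = ⋁ { ⋀_{1≤k≤p} η_{i_k} (x_k) : p ≥ 1, x ∈ x₁ ⊕ ⋯ ⊕ xₚ }`. -/
noncomputable def famSum {ι : Type*} (η : ι → R → unitInterval) (x : R) : unitInterval :=
  sSup {t | ∃ l : List (ι × R), l ≠ [] ∧ x ∈ hsumList (l.map Prod.snd) ∧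
    t = ⨅ p ∈ l, η p.1 p.2}

end Semihyperring

open Semihyperring

/-- `τ(FP_R) = {O_λ : λ a fuzzy hyperideal of R}`. -/
def spectralTopology (R : Type*) [Semihyperring R] : Set (Set (R → unitInterval)) :=
  {S | ∃ lam : R → unitInterval, IsFuzzyHyperideal lam ∧ S = O lam}

/-! `O` turns the lattice operations on fuzzy hyperideals into set operations:
`O 0 = ∅` and `O 1 = FP R`; `O (λ ⊓ μ) = O λ ∩ O μ` because `λμ ≤ λ ⊓ μ` and the members of
`FP R` are prime; and `O (Σᵢ λᵢ) = ⋃ᵢ O λᵢ` because the sum `Σᵢ λᵢ` is a fuzzy hyperideal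
lying below every fuzzy hyperideal that lies above all the `λᵢ`. -/

namespace Semihyperring

variable {R : Type*} [Semihyperring R]

theorem mem_hsumList_cons {a x : R} {L : List R} :
    x ∈ hsumList (a :: L) ↔ ∃ w ∈ hsumList L, x ∈ hadd a w := by
  simp [hsumList, haddSet]

@[simp]
theorem hsumList_singleton (a : R) : hsumList [a] = {a} := by
  ext x
  simp [hsumList, haddSet, hadd_zero]

theorem hadd_subset_hsumList_append {L₁ L₂ : List R} {x y : R}
    (hx : x ∈ hsumList L₁) (hy : y ∈ hsumList L₂) :
    hadd x y ⊆ hsumList (L₁ ++ L₂) := by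
  induction L₁ generalizing x with
  | nil =>
    obtain rfl : x = zero := hx
    simpa [zero_hadd] using hy
  | cons a L ih =>
    obtain ⟨w, hw, hxw⟩ := mem_hsumList_cons.1 hx
    intro z hz
    have hz' : z ∈ ⋃ u ∈ hadd w y, hadd a u := by
      rw [hadd_assoc]
      exact Set.mem_biUnion hxw hz
    obtain ⟨u, hu, hzu⟩ := Set.mem_iUnion₂.1 hz'
    exact mem_hsumList_cons.2 ⟨u, ih hw hu, hzu⟩

def PreservesHsum (f : R → R) : Prop :=
  ∀ (L : List R) (x : R), x ∈ hsumList L → f x ∈ hsumList (L.map f)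

theorem preservesHsum_mul_right (y : R) : PreservesHsum fun x => mul x y := by
  intro L
  induction L with
  | nil =>
    rintro x rfl
    exact zero_mul y
  | cons a L ih =>
    intro x hx
    obtain ⟨w, hw, hxw⟩ := mem_hsumList_cons.1 hx
    refine mem_hsumList_cons.2 ⟨mul w y, ih w hw, ?_⟩
    rw [← right_distrib]
    exact ⟨x, hxw, rfl⟩

theorem preservesHsum_mul_left (y : R) : PreservesHsum fun x => mul y x := by
  intro L
  induction L with
  | nil =>
    rintro x rfl
    exact mul_zero y
  | cons a L ih =>
    intro x hx
    obtain ⟨w, hw, hxw⟩ := mem_hsumList_cons.1 hx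
    refine mem_hsumList_cons.2 ⟨mul y w, ih w hw, ?_⟩
    rw [← left_distrib]
    exact ⟨x, hxw, rfl⟩

theorem le_of_mem_hsumList {μ : R → unitInterval}
    (hμ : ∀ x y : R, μ x ⊓ μ y ≤ ⨅ z ∈ hadd x y, μ z) {t : unitInterval} {L : List R}
    (hL : L ≠ []) (ht : ∀ a ∈ L, t ≤ μ a) {x : R} (hx : x ∈ hsumList L) : t ≤ μ x := by
  induction L generalizing x with
  | nil => exact absurd rfl hL
  | cons a L ih =>
    obtain ⟨w, hw, hxw⟩ := mem_hsumList_cons.1 hx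
    have hta : t ≤ μ a := ht a List.mem_cons_self
    rcases eq_or_ne L [] with rfl | hL'
    · obtain rfl : w = zero := hw
      rw [hadd_zero, Set.mem_singleton_iff] at hxw
      exact hxw ▸ hta
    · have htw : t ≤ μ w := ih hL' (fun b hb => ht b (List.mem_cons_of_mem a hb)) hw
      exact (le_inf hta htw).trans ((hμ a w).trans (iInf₂_le x hxw))

theorem IsFuzzyHyperideal.isFuzzyRightHyperideal {μ : R → unitInterval}
    (hμ : IsFuzzyHyperideal μ) : IsFuzzyRightHyperideal μ :=
  ⟨hμ.1, fun x y => le_sup_left.trans (hμ.2 x y)⟩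

theorem IsFuzzyHyperideal.isFuzzyLeftHyperideal {μ : R → unitInterval}
    (hμ : IsFuzzyHyperideal μ) : IsFuzzyLeftHyperideal μ :=
  ⟨hμ.1, fun x y => le_sup_right.trans (hμ.2 x y)⟩

theorem isFuzzyHyperideal_const (c : unitInterval) :
    IsFuzzyHyperideal fun _ : R => c :=
  ⟨fun _ _ => le_iInf₂ fun _ _ => inf_le_left, fun _ _ => sup_le le_rfl le_rfl⟩

theorem IsFuzzyHyperideal.inf {lam mu : R → unitInterval} (hl : IsFuzzyHyperideal lam)
    (hm : IsFuzzyHyperideal mu) : IsFuzzyHyperideal (lam ⊓ mu) := by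
  refine ⟨fun x y => le_iInf₂ fun z hz => le_inf ?_ ?_, fun x y => le_inf ?_ ?_⟩
  · exact (inf_le_inf inf_le_left inf_le_left).trans ((hl.1 x y).trans (iInf₂_le z hz))
  · exact (inf_le_inf inf_le_right inf_le_right).trans ((hm.1 x y).trans (iInf₂_le z hz))
  · exact (sup_le_sup inf_le_left inf_le_left).trans (hl.2 x y)
  · exact (sup_le_sup inf_le_right inf_le_right).trans (hm.2 x y)

theorem fprod_le_left {lam : R → unitInterval} (hl : IsFuzzyRightHyperideal lam)
    (mu : R → unitInterval) : fprod lam mu ≤ lam := by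
  intro x
  refine sSup_le ?_
  rintro t ⟨l, hne, hx, rfl⟩
  refine le_of_mem_hsumList hl.1 (by simpa using hne) ?_ hx
  simp only [List.forall_mem_map]
  exact fun p hp => (iInf₂_le p hp).trans (inf_le_left.trans (hl.2 p.1 p.2))

theorem fprod_le_right {mu : R → unitInterval} (hm : IsFuzzyLeftHyperideal mu)
    (lam : R → unitInterval) : fprod lam mu ≤ mu := by
  intro x
  refine sSup_le ?_
  rintro t ⟨l, hne, hx, rfl⟩
  refine le_of_mem_hsumList hm.1 (by simpa using hne) ?_ hx
  simp only [List.forall_mem_map]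
  exact fun p hp => (iInf₂_le p hp).trans (inf_le_right.trans (hm.2 p.1 p.2))

section famSum

variable {ι : Type*} {η : ι → R → unitInterval}

theorem le_famSum (η : ι → R → unitInterval) (i : ι) : η i ≤ famSum η := fun x =>
  le_sSup ⟨[(i, x)], List.cons_ne_nil _ _, by simp, by simp⟩

theorem famSum_le {μ : R → unitInterval} (hμ : ∀ x y : R, μ x ⊓ μ y ≤ ⨅ z ∈ hadd x y, μ z)
    (h : ∀ i, η i ≤ μ) : famSum η ≤ μ := by
  intro x
  refine sSup_le ?_
  rintro t ⟨l, hne, hx, rfl⟩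
  refine le_of_mem_hsumList hμ (by simpa using hne) ?_ hx
  simp only [List.forall_mem_map]
  exact fun p hp => (iInf₂_le p hp).trans (h p.1 p.2)

theorem famSum_le_famSum_comp {f : R → R} (hf : PreservesHsum f)
    (hη : ∀ i x, η i x ≤ η i (f x)) (x : R) : famSum η x ≤ famSum η (f x) := by
  refine sSup_le ?_
  rintro t ⟨l, hne, hx, rfl⟩
  have hfx : f x ∈ hsumList ((l.map fun p => (p.1, f p.2)).map Prod.snd) := by
    simpa [Function.comp_def] using hf _ x hx
  refine le_trans (le_iInf₂ fun p hp => ?_) (le_sSup ⟨_, by simpa using hne, hfx, rfl⟩)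
  obtain ⟨q, hq, rfl⟩ := List.mem_map.1 hp
  exact (iInf₂_le q hq).trans (hη q.1 q.2)

theorem IsFuzzyHyperideal.famSum (hη : ∀ i, IsFuzzyHyperideal (η i)) :
    IsFuzzyHyperideal (famSum η) := by
  refine ⟨fun x y => ?_, fun x y => sup_le ?_ ?_⟩
  · rw [Semihyperring.famSum, Semihyperring.famSum, sSup_inf_sSup]
    refine iSup₂_le ?_
    rintro ⟨_, _⟩ ⟨⟨l₁, hne, hx, rfl⟩, ⟨l₂, -, hy, rfl⟩⟩
    refine le_iInf₂ fun z hz => le_sSup ⟨l₁ ++ l₂, by simp [hne], ?_, ?_⟩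
    · rw [List.map_append]
      exact hadd_subset_hsumList_append hx hy hz
    · simp only [List.mem_append, iInf_or, iInf_inf_eq]
  · exact famSum_le_famSum_comp (preservesHsum_mul_right y)
      (fun i x => (hη i).isFuzzyRightHyperideal.2 x y) x
  · exact famSum_le_famSum_comp (preservesHsum_mul_left x)
      (fun i y => (hη i).isFuzzyLeftHyperideal.2 x y) y

end famSum

theorem O_const_zero : O (fun _ : R => (0 : unitInterval)) = ∅ :=
  Set.eq_empty_of_forall_notMem fun _ h => h.2 fun _ => bot_le

theorem O_const_one : O (fun _ : R => (1 : unitInterval)) = FP R := by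
  refine Set.sep_eq_self_iff_mem_true.2 fun η hη hle => hη.2 ?_
  exact funext fun x => le_antisymm unitInterval.le_one' (hle x)

theorem O_inf {lam mu : R → unitInterval} (hl : IsFuzzyHyperideal lam)
    (hm : IsFuzzyHyperideal mu) : O (lam ⊓ mu) = O lam ∩ O mu := by
  ext η
  constructor
  · rintro ⟨hη, hle⟩
    exact ⟨⟨hη, fun h => hle (inf_le_left.trans h)⟩, ⟨hη, fun h => hle (inf_le_right.trans h)⟩⟩
  · rintro ⟨⟨hη, hl'⟩, ⟨-, hm'⟩⟩
    refine ⟨hη, fun hle => ?_⟩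
    have hprod : fprod lam mu ≤ η :=
      (le_inf (fprod_le_left hl.isFuzzyRightHyperideal mu)
        (fprod_le_right hm.isFuzzyLeftHyperideal lam)).trans hle
    exact (hη.1.2 lam mu hl hm hprod).elim hl' hm'

theorem O_famSum {ι : Type*} (η : ι → R → unitInterval) : O (famSum η) = ⋃ i, O (η i) := by
  ext μ
  simp only [O, Set.mem_iUnion, Set.mem_sep_iff]
  constructor
  · rintro ⟨hμ, hle⟩
    by_contra! h
    exact hle (famSum_le hμ.1.1.1 fun i => h i hμ)
  · rintro ⟨i, hμ, hle⟩
    exact ⟨hμ, fun h => hle ((le_famSum η i).trans h)⟩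

end Semihyperring

theorem spectralTopology_isTopology_general (R : Type*) [Semihyperring R] :
    ∅ ∈ spectralTopology R ∧ FP R ∈ spectralTopology R ∧
      (∀ S ∈ spectralTopology R, ∀ T ∈ spectralTopology R, S ∩ T ∈ spectralTopology R) ∧
      (∀ C : Set (Set (R → unitInterval)), C ⊆ spectralTopology R →
        ⋃₀ C ∈ spectralTopology R) := by
  refine ⟨⟨_, isFuzzyHyperideal_const 0, O_const_zero.symm⟩,
    ⟨_, isFuzzyHyperideal_const 1, O_const_one.symm⟩, ?_, fun C hC => ?_⟩
  · rintro _ ⟨lam, hl, rfl⟩ _ ⟨mu, hm, rfl⟩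
    exact ⟨lam ⊓ mu, hl.inf hm, (O_inf hl hm).symm⟩
  · choose η hη hO using fun S : C => hC S.2
    refine ⟨famSum η, IsFuzzyHyperideal.famSum hη, ?_⟩
    rw [O_famSum, Set.sUnion_eq_iUnion]
    exact Set.iUnion_congr hO

/-- for a fully idempotent semihyperring `R`, `τ(FP_R)` is a topology on
`FP_R`: it contains `∅` and `FP_R`, and is closed under finite intersections and arbitrary
unions. -/
theorem spectralTopology_isTopology (R : Type*) [Semihyperring R] (h : FullyIdempotent R) :
    ∅ ∈ spectralTopology R ∧ FP R ∈ spectralTopology R ∧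
      (∀ S ∈ spectralTopology R, ∀ T ∈ spectralTopology R, S ∩ T ∈ spectralTopology R) ∧
      (∀ C : Set (Set (R → unitInterval)), C ⊆ spectralTopology R →
        ⋃₀ C ∈ spectralTopology R) :=
  spectralTopology_isTopology_general R
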